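/- Let φ be a simple, normalized valuation on convex polyhedral cones in ℝⁿ, φ° the additive extension of its dual valuation, and κ(P,x) := φ°(Tan(P,x)) for x ∈ P, κ(P,x) := 0 for x ∉ P. Then for every polyhedron P ⊂ ℝⁿ, κ(P,x) ≠ 0 for only finitely many x, and Σ_{x ∈ P} κ(P,x) = χ(P), the Euler characteristic of P. -/

import Mathlib

open scoped RealInnerProductSpace
open MeasureTheory

attribute [local instance] Classical.propDecidable

noncomputable section

abbrev E (n : ℕ) : Type := EuclideanSpace ℝ (Fin n)

/-- The dual cone `C° = {x : ⟪x,y⟫ ≤ 0 for all y ∈ C}`. -/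
def polarDual {n : ℕ} (C : Set (E n)) : Set (E n) := {x | ∀ y ∈ C, ⟪x, y⟫ ≤ 0}

/-- A convex polyhedral cone: a finite intersection of closed halfspaces whose
boundaries contain the origin (empty intersection = ℝⁿ). -/
def IsPolyhedralCone {n : ℕ} (C : Set (E n)) : Prop :=
  ∃ s : Finset (E n), C = {x | ∀ u ∈ s, ⟪u, x⟫ ≤ 0}

/-- A (nonempty) compact convex polytope: the convex hull of a nonempty finite set. -/
def IsPolytope {n : ℕ} (P : Set (E n)) : Prop :=
  ∃ s : Finset (E n), s.Nonempty ∧ P = convexHull ℝ (s : Set (E n))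

/-- A polyhedron: a finite union of compact convex polytopes (possibly empty). -/
def IsPolyhedron {n : ℕ} (P : Set (E n)) : Prop :=
  ∃ F : Finset (Set (E n)), (∀ A ∈ F, IsPolytope A) ∧ P = ⋃₀ F

/-- The tangent cone `Tan(P,x) = {v : [x, x+λv] ⊆ P for some λ > 0}`. -/
def Tan {n : ℕ} (P : Set (E n)) (x : E n) : Set (E n) :=
  {v | ∃ l : ℝ, 0 < l ∧ segment ℝ x (x + l • v) ⊆ P}

/-- The (linear) dimension of a cone, i.e. the dimension of its linear span. -/
def coneDim {n : ℕ} (C : Set (E n)) : ℕ := Module.finrank ℝ (Submodule.span ℝ C)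

/-- A valuation on the family of convex polyhedral cones. -/
def IsConeValuation {n : ℕ} (φ : Set (E n) → ℝ) : Prop :=
  ∀ C D : Set (E n), IsPolyhedralCone C → IsPolyhedralCone D → IsPolyhedralCone (C ∪ D) →
    φ (C ∪ D) + φ (C ∩ D) = φ C + φ D

/-- A simple valuation vanishes on cones of dimension `< n`. -/
def IsSimple {n : ℕ} (φ : Set (E n) → ℝ) : Prop :=
  ∀ C : Set (E n), IsPolyhedralCone C → coneDim C < n → φ C = 0

/-- A finite union of convex polyhedral cones (possibly empty). -/
def IsConeUnion {n : ℕ} (S : Set (E n)) : Prop :=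
  ∃ F : Finset (Set (E n)), (∀ A ∈ F, IsPolyhedralCone A) ∧ S = ⋃₀ F

/-- A relatively open polyhedral cone: the relative interior of a convex polyhedral cone. -/
def IsROCone {n : ℕ} (A : Set (E n)) : Prop :=
  ∃ C : Set (E n), IsPolyhedralCone C ∧ A = intrinsicInterior ℝ C

/-- A finite union of relatively open polyhedral cones (possibly empty). -/
def IsROConeUnion {n : ℕ} (S : Set (E n)) : Prop :=
  ∃ F : Finset (Set (E n)), (∀ A ∈ F, IsROCone A) ∧ S = ⋃₀ F

/-- The normal cone `N(P,x) = {u : ⟪u, y - x⟫ ≤ 0 for all y ∈ P}`. -/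
def normalCone {n : ℕ} (P : Set (E n)) (x : E n) : Set (E n) :=
  {u | ∀ y ∈ P, ⟪u, y - x⟫ ≤ 0}

/-- The outer angle `Γ(C) = σ(C° ∩ S^{n-1})`, expressed via the normalized
solid-angle (cone-volume) measure, which agrees with the normalized spherical
Lebesgue measure of `C° ∩ S^{n-1}` for cones `C°`. -/
def outerAngle {n : ℕ} (C : Set (E n)) : ℝ :=
  (volume (polarDual C ∩ Metric.closedBall (0 : E n) 1)).toReal /
    (volume (Metric.closedBall (0 : E n) 1)).toReal

/-!
At a point `x` of a polytope `conv s` the tangent cone is generated by `s - x`, so its dual is the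
normal cone `hCone (s - x)`. That cone is orthogonal to some `q - x ≠ 0` unless `x ∈ s`, and the
normal cones at the points of `s` tile `ℝⁿ` up to lower-dimensional overlaps (refine everything by
the hyperplanes `(p - q)⟂`): hence `κ(conv s, ·)` is supported on `s` with total mass
`φ(ℝⁿ) = 1 = χ(conv s)`. For fixed `x`, the tangent cone commutes with unions and intersections of
polytopes, so `P ↦ κ(P, x)` is a valuation and the theorem follows by inclusion–exclusion over the
polytopes making up `P`. That tangent cones and intersections of polytopes are again polyhedral is
the Minkowski–Weyl theorem.
-/

section FGCone

variable {V : Type*} [AddCommGroup V] [Module ℝ V]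

def fgCone (t : Finset V) : Set V :=
  {x | ∃ c : V → ℝ, (∀ v, 0 ≤ c v) ∧ x = ∑ v ∈ t, c v • v}

lemma zero_mem_fgCone (t : Finset V) : (0 : V) ∈ fgCone t :=
  ⟨0, fun _ => le_rfl, by simp⟩

lemma mem_fgCone_of_mem {t : Finset V} {w : V} (hw : w ∈ t) : w ∈ fgCone t := by
  refine ⟨fun v => if v = w then 1 else 0, fun v => by by_cases h : v = w <;> simp [h], ?_⟩
  simp [ite_smul, Finset.sum_ite_eq', hw]

lemma add_mem_fgCone {t : Finset V} {x y : V} (hx : x ∈ fgCone t) (hy : y ∈ fgCone t) :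
    x + y ∈ fgCone t := by
  obtain ⟨c, hc, rfl⟩ := hx
  obtain ⟨d, hd, rfl⟩ := hy
  exact ⟨c + d, fun v => add_nonneg (hc v) (hd v), by simp [add_smul, Finset.sum_add_distrib]⟩

lemma smul_mem_fgCone {t : Finset V} {x : V} {a : ℝ} (ha : 0 ≤ a) (hx : x ∈ fgCone t) :
    a • x ∈ fgCone t := by
  obtain ⟨c, hc, rfl⟩ := hx
  exact ⟨a • c, fun v => mul_nonneg ha (hc v), by simp [Finset.smul_sum, smul_smul]⟩

lemma sum_smul_mem_fgCone_image [DecidableEq V] {ι : Type*} {s : Finset ι} (f : ι → V)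
    {c : ι → ℝ} (hc : ∀ i ∈ s, 0 ≤ c i) : ∑ i ∈ s, c i • f i ∈ fgCone (s.image f) :=
  Finset.sum_induction _ (· ∈ fgCone (s.image f)) (fun _ _ => add_mem_fgCone)
    (zero_mem_fgCone _) fun i hi => smul_mem_fgCone (hc i hi) (mem_fgCone_of_mem
      (Finset.mem_image_of_mem f hi))

lemma convex_fgCone (t : Finset V) : Convex ℝ (fgCone t) :=
  fun _ hx _ hy _ _ ha hb _ => add_mem_fgCone (smul_mem_fgCone ha hx) (smul_mem_fgCone hb hy)

lemma fgCone_empty : fgCone (∅ : Finset V) = {0} := by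
  ext x
  exact ⟨fun ⟨_, _, h⟩ => by simpa using h, fun h => ⟨0, fun _ => le_rfl, by simpa using h⟩⟩

lemma fgCone_insert {v : V} {t : Finset V} (hv : v ∉ t) :
    fgCone (insert v t) = {x | ∃ l : ℝ, 0 ≤ l ∧ x - l • v ∈ fgCone t} := by
  ext x
  constructor
  · rintro ⟨c, hc, rfl⟩
    exact ⟨c v, hc v, c, hc, by rw [Finset.sum_insert hv, add_sub_cancel_left]⟩
  · rintro ⟨l, hl, c, hc, hx⟩
    refine ⟨Function.update c v l, fun w => ?_, ?_⟩
    · by_cases h : w = v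
      · subst h; simpa using hl
      · simpa [h] using hc w
    rw [Finset.sum_insert hv, Function.update_self,
      Finset.sum_congr rfl fun w hw => by rw [Function.update_of_ne (ne_of_mem_of_not_mem hw hv)],
      ← hx, add_sub_cancel]

end FGCone

section HCone

variable {V : Type*} [NormedAddCommGroup V] [InnerProductSpace ℝ V]

def hCone (s : Finset V) : Set V := {x | ∀ u ∈ s, ⟪u, x⟫ ≤ 0}

lemma hCone_union [DecidableEq V] (s t : Finset V) : hCone (s ∪ t) = hCone s ∩ hCone t := by
  ext x
  simp only [hCone, Finset.mem_union, or_imp, forall_and, Set.mem_inter_iff, Set.mem_ofPred_eq]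

lemma inner_nonpos_of_mem_fgCone_of_mem_hCone {t : Finset V} {u x : V} (hu : u ∈ fgCone t)
    (hx : x ∈ hCone t) : ⟪u, x⟫ ≤ 0 := by
  obtain ⟨c, hc, rfl⟩ := hu
  rw [sum_inner]
  exact Finset.sum_nonpos fun v hv => by
    rw [real_inner_smul_left]; exact mul_nonpos_of_nonneg_of_nonpos (hc v) (hx v hv)

lemma fgCone_subset_hCone {s t : Finset V} (h : ∀ w ∈ t, ∀ u ∈ s, ⟪u, w⟫ ≤ 0) :
    fgCone t ⊆ hCone s := fun x hx u hu => by
  rw [real_inner_comm]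
  exact inner_nonpos_of_mem_fgCone_of_mem_hCone hx fun w hw => by
    rw [real_inner_comm]; exact h w hw u hu

lemma exists_inner_neg_of_mem_hCone {D c : Finset V}
    (h : ∀ d ∈ D, ∃ y ∈ hCone c, ⟪d, y⟫ ≠ 0) : ∃ x₀ : V, ∀ d ∈ D, d ∈ c → ⟪d, x₀⟫ < 0 := by
  choose! y hy hy' using h
  refine ⟨∑ d ∈ D, y d, fun d hd hdc => ?_⟩
  rw [inner_sum]
  exact Finset.sum_neg' (fun d' hd' => hy d' hd' d hdc)
    ⟨d, hd, lt_of_le_of_ne (hy d hd d hdc) (hy' d hd)⟩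

lemma exists_hCone_eq_zero [FiniteDimensional ℝ V] : ∃ s : Finset V, hCone s = {0} := by
  let b := stdOrthonormalBasis ℝ V
  refine ⟨Finset.univ.image b ∪ Finset.univ.image (-b ·),
    Set.eq_singleton_iff_unique_mem.2 ⟨fun u _ => by simp, fun x hx => ?_⟩⟩
  have h : ∀ i, ⟪b i, x⟫ = 0 := fun i =>
    le_antisymm (hx _ (by simp)) (by simpa using hx (-b i) (by simp))
  rw [← b.sum_repr' x]
  simp [h]

/-- Fourier–Motzkin elimination of the parameter `l` from `x - l • v ∈ hCone s`: keep the
constraints not increasing along `v`, and add the positive combination of each pair of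
constraints of opposite signs along `v` in which `v` cancels. -/
def rayGens (v : V) (s : Finset V) : Finset V :=
  s.filter (fun u => ⟪u, v⟫ ≤ 0) ∪
    ((s ×ˢ s).filter (fun pq => 0 < ⟪pq.1, v⟫ ∧ ⟪pq.2, v⟫ < 0)).image
      (fun pq => ⟪pq.1, v⟫ • pq.2 - ⟪pq.2, v⟫ • pq.1)

lemma mem_hCone_rayGens {v x : V} {s : Finset V} {l : ℝ} (hl : 0 ≤ l)
    (hx : x - l • v ∈ hCone s) : x ∈ hCone (rayGens v s) := by
  have hx' : ∀ u ∈ s, ⟪u, x⟫ ≤ l * ⟪u, v⟫ := fun u hu => by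
    have := hx u hu
    rw [inner_sub_right, real_inner_smul_right] at this
    linarith
  intro g hg
  rcases Finset.mem_union.1 hg with hg | hg
  · obtain ⟨hu, hneg⟩ := Finset.mem_filter.1 hg
    nlinarith [hx' g hu]
  · obtain ⟨⟨u, u'⟩, hpq, rfl⟩ := Finset.mem_image.1 hg
    obtain ⟨hmem, hpos, hneg⟩ := Finset.mem_filter.1 hpq
    obtain ⟨hu, hu'⟩ := Finset.mem_product.1 hmem
    rw [inner_sub_left, real_inner_smul_left, real_inner_smul_left]
    nlinarith [hx' u hu, hx' u' hu']

lemma exists_sub_smul_mem_hCone {v x : V} {s : Finset V} (hx : x ∈ hCone (rayGens v s)) :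
    ∃ l : ℝ, 0 ≤ l ∧ x - l • v ∈ hCone s := by
  have hzero : ∀ u ∈ s, ⟪u, v⟫ ≤ 0 → ⟪u, x⟫ ≤ 0 := fun u hu h =>
    hx u (Finset.mem_union_left _ (Finset.mem_filter.2 ⟨hu, h⟩))
  set ratio : V → ℝ := fun u => ⟪u, x⟫ / ⟪u, v⟫
  have hpair : ∀ u ∈ s, ∀ u' ∈ s, 0 < ⟪u, v⟫ → ⟪u', v⟫ < 0 → ratio u ≤ ratio u' := by
    intro u hu u' hu' h h'
    have hmem : (u, u') ∈ (s ×ˢ s).filter (fun pq => 0 < ⟪pq.1, v⟫ ∧ ⟪pq.2, v⟫ < 0) :=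
      Finset.mem_filter.2 ⟨Finset.mem_product.2 ⟨hu, hu'⟩, h, h'⟩
    have := hx _ (Finset.mem_union_right _ (Finset.mem_image_of_mem _ hmem))
    rw [inner_sub_left, real_inner_smul_left, real_inner_smul_left] at this
    rw [div_le_iff₀ h, div_mul_eq_mul_div, le_div_iff_of_neg h']
    linarith
  set lower := insert 0 ((s.filter (fun u => 0 < ⟪u, v⟫)).image ratio)
  set l := lower.max' (Finset.insert_nonempty _ _)
  refine ⟨l, lower.le_max' 0 (Finset.mem_insert_self _ _), fun u hu => ?_⟩
  rw [inner_sub_right, real_inner_smul_right, sub_nonpos]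
  rcases lt_trichotomy ⟪u, v⟫ 0 with h | h | h
  · refine (le_div_iff_of_neg h).1 (lower.max'_le _ _ fun y hy => ?_)
    rcases Finset.mem_insert.1 hy with rfl | hy
    · exact div_nonneg_of_nonpos (hzero u hu h.le) h.le
    · obtain ⟨u', hu', rfl⟩ := Finset.mem_image.1 hy
      exact hpair u' (Finset.mem_filter.1 hu').1 u hu (Finset.mem_filter.1 hu').2 h
  · rw [h, mul_zero]; exact hzero u hu h.le
  · exact (div_le_iff₀ h).1 (lower.le_max' _ (Finset.mem_insert_of_mem
      (Finset.mem_image_of_mem _ (Finset.mem_filter.2 ⟨hu, h⟩))))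

/-- Weyl's theorem, by Fourier–Motzkin elimination of one generator at a time. -/
theorem exists_hCone_eq_fgCone [FiniteDimensional ℝ V] (t : Finset V) :
    ∃ s : Finset V, fgCone t = hCone s := by
  induction t using Finset.induction with
  | empty =>
    obtain ⟨s, hs⟩ := exists_hCone_eq_zero (V := V)
    exact ⟨s, by rw [hs, fgCone_empty]⟩
  | @insert v t hv ih =>
    obtain ⟨s, hs⟩ := ih
    refine ⟨rayGens v s, Set.ext fun x => ?_⟩
    rw [fgCone_insert hv, Set.mem_ofPred_eq, hs]
    exact ⟨fun ⟨l, hl, h⟩ => mem_hCone_rayGens hl h, exists_sub_smul_mem_hCone⟩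

/-- Minkowski's theorem for cones, deduced from Weyl's by duality. -/
theorem exists_fgCone_eq_hCone [FiniteDimensional ℝ V] (s : Finset V) :
    ∃ t : Finset V, hCone s = fgCone t := by
  obtain ⟨r, hr⟩ := exists_hCone_eq_fgCone s
  obtain ⟨r', hr'⟩ := exists_hCone_eq_fgCone r
  refine ⟨r, subset_antisymm (fun x hx => ?_) (fgCone_subset_hCone fun w hw u hu => ?_)⟩
  · rw [hr']
    intro u hu
    have hu_mem : u ∈ fgCone s := by
      rw [hr]
      intro w hw
      rw [real_inner_comm]
      exact (hr' ▸ mem_fgCone_of_mem hw : w ∈ hCone r') u hu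
    exact inner_nonpos_of_mem_fgCone_of_mem_hCone hu_mem hx
  · rw [real_inner_comm]
    exact (hr ▸ mem_fgCone_of_mem hu : u ∈ hCone r) w hw

theorem exists_fgCone_eq_inter [FiniteDimensional ℝ V] (t₁ t₂ : Finset V) :
    ∃ t : Finset V, fgCone t₁ ∩ fgCone t₂ = fgCone t := by
  obtain ⟨s₁, h₁⟩ := exists_hCone_eq_fgCone t₁
  obtain ⟨s₂, h₂⟩ := exists_hCone_eq_fgCone t₂
  obtain ⟨t, ht⟩ := exists_fgCone_eq_hCone (s₁ ∪ s₂)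
  exact ⟨t, by rw [h₁, h₂, ← hCone_union, ht]⟩

end HCone

section SimpleValuation

variable {n : ℕ} {φ : Set (E n) → ℝ}

lemma isPolyhedralCone_hCone (s : Finset (E n)) : IsPolyhedralCone (hCone s) := ⟨s, rfl⟩

lemma IsSimple.eq_zero_of_forall_inner_eq_zero (hsimple : IsSimple φ) {C : Set (E n)}
    (hC : IsPolyhedralCone C) {w : E n} (hw : w ≠ 0) (h : ∀ x ∈ C, ⟪w, x⟫ = 0) : φ C = 0 := by
  refine hsimple C hC ?_
  have hle : Submodule.span ℝ C ≤ (ℝ ∙ w)ᗮ :=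
    Submodule.span_le.2 fun x hx => Submodule.mem_orthogonal_singleton_iff_inner_right.2 (h x hx)
  have hdim := Submodule.finrank_add_finrank_orthogonal (ℝ ∙ w)
  rw [finrank_span_singleton hw, finrank_euclideanSpace_fin] at hdim
  have := Submodule.finrank_mono hle
  unfold coneDim
  omega

lemma IsSimple.phi_hCone_eq_zero (hsimple : IsSimple φ) {s : Finset (E n)} {d : E n}
    (hd : d ≠ 0) (h₁ : d ∈ s) (h₂ : -d ∈ s) : φ (hCone s) = 0 :=
  hsimple.eq_zero_of_forall_inner_eq_zero (isPolyhedralCone_hCone s) hd fun x hx => by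
    have := hx _ h₂
    rw [inner_neg_left] at this
    exact le_antisymm (hx d h₁) (by linarith)

lemma IsConeValuation.phi_hCone_eq_add (hφ : IsConeValuation φ) (hsimple : IsSimple φ)
    (s : Finset (E n)) {w : E n} (hw : w ≠ 0) :
    φ (hCone s) = φ (hCone (insert w s)) + φ (hCone (insert (-w) s)) := by
  have hunion : hCone (insert w s) ∪ hCone (insert (-w) s) = hCone s := by
    ext x
    simp only [hCone, Finset.mem_insert, forall_eq_or_imp, Set.mem_union, Set.mem_ofPred_eq,
      inner_neg_left]
    constructor
    · rintro (⟨-, h⟩ | ⟨-, h⟩) <;> exact h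
    · intro h
      rcases le_total ⟪w, x⟫ 0 with hw | hw
      exacts [Or.inl ⟨hw, h⟩, Or.inr ⟨by linarith, h⟩]
  have hinter : hCone (insert w s) ∩ hCone (insert (-w) s) = hCone (insert w (insert (-w) s)) := by
    ext x
    simp only [hCone, Finset.mem_insert, forall_eq_or_imp, Set.mem_inter_iff, Set.mem_ofPred_eq]
    tauto
  have := hφ _ _ (isPolyhedralCone_hCone _) (isPolyhedralCone_hCone _)
    (hunion ▸ isPolyhedralCone_hCone s)
  rw [hunion, hinter, hsimple.phi_hCone_eq_zero hw (Finset.mem_insert_self _ _)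
    (Finset.mem_insert_of_mem (Finset.mem_insert_self _ _))] at this
  linarith

/-- The cones `hCone c`, `c ∈ M`, are the cells cut out by the hyperplanes orthogonal to the
vectors of `D`; a simple valuation is additive over the subdivision of any `hCone s` by them. -/
lemma exists_cell_decomposition (hφ : IsConeValuation φ) (hsimple : IsSimple φ) (D : Finset (E n))
    (hD : (0 : E n) ∉ D) :
    ∃ M : Multiset (Finset (E n)), (∀ c ∈ M, ∀ w ∈ D, w ∈ c ∨ -w ∈ c) ∧
      ∀ s : Finset (E n), (M.map fun c => φ (hCone (s ∪ c))).sum = φ (hCone s) := by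
  induction D using Finset.induction with
  | empty => exact ⟨{∅}, by simp, by simp⟩
  | @insert w D hwD ih =>
    obtain ⟨M, hsign, hsum⟩ := ih fun h => hD (Finset.mem_insert_of_mem h)
    have hw : w ≠ 0 := fun h => hD (h ▸ Finset.mem_insert_self w D)
    refine ⟨M.map (insert w) + M.map (insert (-w)), fun c hc u hu => ?_, fun s => ?_⟩
    · simp only [Multiset.mem_add, Multiset.mem_map] at hc
      rcases hc with ⟨c, hc, rfl⟩ | ⟨c, hc, rfl⟩ <;> rcases Finset.mem_insert.1 hu with rfl | hu
      · exact Or.inl (Finset.mem_insert_self _ _)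
      · exact (hsign c hc u hu).imp (Finset.mem_insert_of_mem ·) (Finset.mem_insert_of_mem ·)
      · exact Or.inr (Finset.mem_insert_self _ _)
      · exact (hsign c hc u hu).imp (Finset.mem_insert_of_mem ·) (Finset.mem_insert_of_mem ·)
    · rw [← hsum s, Multiset.map_add, Multiset.sum_add, Multiset.map_map, Multiset.map_map,
        ← Multiset.sum_map_add]
      refine congrArg Multiset.sum (Multiset.map_congr rfl fun c _ => ?_)
      simp only [Function.comp_apply, Finset.union_insert]
      exact (hφ.phi_hCone_eq_add hsimple (s ∪ c) hw).symm

lemma IsSimple.sum_phi_hCone_image_sub_union_of_forall_sub_mem (hsimple : IsSimple φ)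
    {s c : Finset (E n)} {v₀ : E n} (hv₀ : v₀ ∈ s) (hbelow : ∀ q ∈ s, q ≠ v₀ → q - v₀ ∈ c) :
    ∑ v ∈ s, φ (hCone (s.image (· - v) ∪ c)) = φ (hCone c) := by
  rw [Finset.sum_eq_single_of_mem v₀ hv₀ fun v hv hvv₀ =>
    hsimple.phi_hCone_eq_zero (sub_ne_zero.2 (Ne.symm hvv₀))
      (Finset.mem_union_left _ (Finset.mem_image_of_mem (· - v) hv₀))
      (Finset.mem_union_right _ (by rw [neg_sub]; exact hbelow v hv hvv₀))]
  refine congrArg φ (subset_antisymm (by rw [hCone_union]; exact Set.inter_subset_right)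
    fun x hx u hu => ?_)
  rcases Finset.mem_union.1 hu with hu | hu
  · obtain ⟨q, hq, rfl⟩ := Finset.mem_image.1 hu
    by_cases hqv : q = v₀
    · simp [hqv]
    · exact hx _ (hbelow q hq hqv)
  · exact hx u hu

lemma IsSimple.sum_phi_hCone_image_sub_union (hsimple : IsSimple φ) {s : Finset (E n)}
    (hs : s.Nonempty) {c : Finset (E n)} (hc : ∀ p ∈ s, ∀ q ∈ s, p ≠ q → p - q ∈ c ∨ q - p ∈ c) :
    ∑ v ∈ s, φ (hCone (s.image (· - v) ∪ c)) = φ (hCone c) := by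
  by_cases hdeg : ∃ p ∈ s, ∃ q ∈ s, p ≠ q ∧ ∀ x ∈ hCone c, ⟪p - q, x⟫ = 0
  · obtain ⟨p, -, q, -, hpq, h⟩ := hdeg
    have hzero : ∀ X, hCone X ⊆ hCone c → φ (hCone X) = 0 := fun X hX =>
      hsimple.eq_zero_of_forall_inner_eq_zero (isPolyhedralCone_hCone X) (sub_ne_zero.2 hpq)
        fun x hx => h x (hX hx)
    rw [hzero c subset_rfl, Finset.sum_eq_zero fun v _ => hzero _ (by
      rw [hCone_union]; exact Set.inter_subset_right)]
  push Not at hdeg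
  -- `x₀` is negative on every `p - q ∈ c`, so the maximiser `v₀` of `⟪·, x₀⟫` has `q - v₀ ∈ c`.
  obtain ⟨x₀, hx₀⟩ := exists_inner_neg_of_mem_hCone
    (D := s.offDiag.image fun pq => pq.1 - pq.2) fun d hd => by
      obtain ⟨⟨p, q⟩, hpq, rfl⟩ := Finset.mem_image.1 hd
      obtain ⟨hp, hq, hne⟩ := Finset.mem_offDiag.1 hpq
      exact hdeg p hp q hq hne
  obtain ⟨v₀, hv₀, hmax⟩ := Finset.exists_max_image s (fun v => ⟪v, x₀⟫) hs
  refine hsimple.sum_phi_hCone_image_sub_union_of_forall_sub_mem hv₀ fun q hq hqv =>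
    (hc q hq v₀ hv₀ hqv).resolve_right fun h => ?_
  have hmem : (v₀, q) ∈ s.offDiag := Finset.mem_offDiag.2 ⟨hv₀, hq, Ne.symm hqv⟩
  have := hx₀ _ (Finset.mem_image_of_mem (fun pq : E n × E n => pq.1 - pq.2) hmem) h
  rw [inner_sub_left] at this
  linarith [hmax q hq]

theorem sum_phi_hCone_image_sub (hφ : IsConeValuation φ) (hsimple : IsSimple φ)
    (hnorm : φ Set.univ = 1) {s : Finset (E n)} (hs : s.Nonempty) :
    ∑ v ∈ s, φ (hCone (s.image (· - v))) = 1 := by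
  obtain ⟨M, hsign, hsum⟩ :=
    exists_cell_decomposition hφ hsimple (s.offDiag.image fun pq => pq.1 - pq.2)
      (by simp [sub_eq_zero])
  have hcell : ∀ c ∈ M, ∀ p ∈ s, ∀ q ∈ s, p ≠ q → p - q ∈ c ∨ q - p ∈ c :=
    fun c hc p hp q hq hpq => by
      have hmem : (p, q) ∈ s.offDiag := Finset.mem_offDiag.2 ⟨hp, hq, hpq⟩
      simpa [neg_sub] using
        hsign c hc (p - q) (Finset.mem_image_of_mem (fun pq : E n × E n => pq.1 - pq.2) hmem)
  calc ∑ v ∈ s, φ (hCone (s.image (· - v)))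
      = ∑ v ∈ s, (M.map fun c => φ (hCone (s.image (· - v) ∪ c))).sum := by simp only [hsum]
    _ = (M.map fun c => ∑ v ∈ s, φ (hCone (s.image (· - v) ∪ c))).sum :=
      Multiset.sum_map_sum_map _ _
    _ = (M.map fun c => φ (hCone (∅ ∪ c))).sum := congrArg Multiset.sum <|
      Multiset.map_congr rfl fun c hc => by
        rw [Finset.empty_union, hsimple.sum_phi_hCone_image_sub_union hs (hcell c hc)]
    _ = 1 := by rw [hsum, ← hnorm]; congr 1; ext; simp [hCone]

lemma IsSimple.phi_hCone_image_sub_eq_zero (hsimple : IsSimple φ) {s : Finset (E n)} {x : E n}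
    (hx : x ∈ convexHull ℝ (s : Set (E n))) (hxs : x ∉ s) : φ (hCone (s.image (· - x))) = 0 := by
  obtain ⟨w, hw0, hw1, hwx⟩ := Finset.mem_convexHull'.1 hx
  obtain ⟨q, hq, hwq⟩ : ∃ q ∈ s, 0 < w q := by
    by_contra! h
    linarith [Finset.sum_nonpos h]
  -- every normal vector `u` at `x` is orthogonal to each `q - x` with positive weight
  refine hsimple.eq_zero_of_forall_inner_eq_zero (isPolyhedralCone_hCone _)
    (sub_ne_zero.2 (ne_of_mem_of_not_mem hq hxs)) fun u hu => ?_
  have hle : ∀ p ∈ s, w p * ⟪p - x, u⟫ ≤ 0 := fun p hp =>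
    mul_nonpos_of_nonneg_of_nonpos (hw0 p hp) (hu _ (Finset.mem_image_of_mem _ hp))
  have hsum : ∑ p ∈ s, w p * ⟪p - x, u⟫ = 0 := by
    simp_rw [← real_inner_smul_left, ← sum_inner, smul_sub, Finset.sum_sub_distrib,
      ← Finset.sum_smul, hw1, one_smul, hwx, sub_self, inner_zero_left]
  exact (mul_eq_zero.1 ((Finset.sum_eq_zero_iff_of_nonpos hle).1 hsum q hq)).resolve_left hwq.ne'

end SimpleValuation

section TangentGerm

open Filter Topology

variable {V : Type*} [AddCommGroup V] [Module ℝ V]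

/-- Unlike `Tan`, this germ version of the tangent cone is empty off a closed set and commutes
with intersections. -/
def tanGerm (P : Set V) (x : V) : Set V := {v | ∀ᶠ t in 𝓝[>] (0 : ℝ), x + t • v ∈ P}

def IsRayTame (P : Set V) (x : V) : Prop :=
  ∀ v : V, (∀ᶠ t in 𝓝[>] (0 : ℝ), x + t • v ∈ P) ∨ ∀ᶠ t in 𝓝[>] (0 : ℝ), x + t • v ∉ P

lemma mem_tanGerm {P : Set V} {x v : V} :
    v ∈ tanGerm P x ↔ ∀ᶠ t in 𝓝[>] (0 : ℝ), x + t • v ∈ P :=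
  Iff.rfl

lemma tanGerm_inter (P Q : Set V) (x : V) : tanGerm (P ∩ Q) x = tanGerm P x ∩ tanGerm Q x := by
  ext v
  simp only [mem_tanGerm, Set.mem_inter_iff, eventually_and]

lemma IsRayTame.tanGerm_union {P : Set V} {x : V} (hP : IsRayTame P x) (Q : Set V) :
    tanGerm (P ∪ Q) x = tanGerm P x ∪ tanGerm Q x := by
  ext v
  simp only [mem_tanGerm, Set.mem_union]
  refine ⟨fun h => (hP v).imp id fun hout => (h.and hout).mono fun _ ht => ht.1.resolve_left ht.2,
    ?_⟩
  rintro (h | h)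
  exacts [h.mono fun _ => Or.inl, h.mono fun _ => Or.inr]

lemma Convex.mem_tanGerm_iff {P : Set V} (hP : Convex ℝ P) {x v : V} (hx : x ∈ P) :
    v ∈ tanGerm P x ↔ ∃ t : ℝ, 0 < t ∧ x + t • v ∈ P := by
  rw [mem_tanGerm]
  refine ⟨fun h => (h.and self_mem_nhdsWithin).exists.imp fun t ht => ⟨ht.2, ht.1⟩, ?_⟩
  rintro ⟨t, ht, htP⟩
  filter_upwards [Ioc_mem_nhdsGT ht] with τ hτ
  have := hP.add_smul_mem hx htP ⟨div_nonneg hτ.1.le ht.le, (div_le_one ht).2 hτ.2⟩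
  rwa [smul_smul, div_mul_cancel₀ _ ht.ne'] at this

lemma tanGerm_convexHull [DecidableEq V] {s : Finset V} {x : V}
    (hx : x ∈ convexHull ℝ (s : Set V)) :
    tanGerm (convexHull ℝ (s : Set V)) x = fgCone (s.image (· - x)) := by
  ext v
  rw [(convex_convexHull ℝ _).mem_tanGerm_iff hx]
  constructor
  · rintro ⟨t, ht, hmem⟩
    obtain ⟨w, hw0, hw1, hwx⟩ := Finset.mem_convexHull'.1 hmem
    have hv : ∑ q ∈ s, (t⁻¹ * w q) • (q - x) = v := by
      simp_rw [← smul_smul, ← Finset.smul_sum, smul_sub, Finset.sum_sub_distrib, ← Finset.sum_smul,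
        hw1, one_smul, hwx, add_sub_cancel_left, smul_smul, inv_mul_cancel₀ ht.ne', one_smul]
    exact hv ▸ sum_smul_mem_fgCone_image _ fun q hq => mul_nonneg (inv_nonneg.2 ht.le) (hw0 q hq)
  · rintro ⟨c, hc, rfl⟩
    rw [Finset.sum_image fun _ _ _ _ h => sub_left_injective h]
    set T := ∑ q ∈ s, c (q - x)
    rcases (Finset.sum_nonneg fun q _ => hc (q - x) : 0 ≤ T).eq_or_lt with hT | hT
    · have hc0 : ∀ q ∈ s, c (q - x) = 0 :=
        (Finset.sum_eq_zero_iff_of_nonneg fun q _ => hc _).1 hT.symm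
      refine ⟨1, one_pos, ?_⟩
      rwa [Finset.sum_eq_zero fun q hq => by rw [hc0 q hq, zero_smul], smul_zero, add_zero]
    · refine ⟨T⁻¹, inv_pos.2 hT, ?_⟩
      have hT1 : ∑ q ∈ s, T⁻¹ * c (q - x) = 1 := by rw [← Finset.mul_sum, inv_mul_cancel₀ hT.ne']
      have : x + T⁻¹ • ∑ q ∈ s, c (q - x) • (q - x) = ∑ q ∈ s, (T⁻¹ * c (q - x)) • q := by
        simp_rw [Finset.smul_sum, smul_smul, smul_sub, Finset.sum_sub_distrib, ← Finset.sum_smul,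
          hT1, one_smul, add_sub_cancel]
      rw [this]
      exact (convex_convexHull ℝ _).sum_mem (fun q _ => mul_nonneg (inv_nonneg.2 hT.le) (hc _))
        hT1 fun q hq => subset_convexHull ℝ _ hq

variable [TopologicalSpace V] [IsTopologicalAddGroup V] [ContinuousSMul ℝ V]

lemma tendsto_add_smul_nhdsGT (x v : V) :
    Tendsto (fun t : ℝ => x + t • v) (𝓝[>] 0) (𝓝 x) := by
  have : Continuous fun t : ℝ => x + t • v := by fun_prop
  simpa using (this.tendsto 0).mono_left nhdsWithin_le_nhds

lemma IsClosed.tanGerm_eq_empty {P : Set V} (hP : IsClosed P) {x : V} (hx : x ∉ P) :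
    tanGerm P x = ∅ :=
  Set.eq_empty_of_forall_notMem fun v hv =>
    hx (hP.mem_of_tendsto (tendsto_add_smul_nhdsGT x v) hv)

lemma Convex.isRayTame {P : Set V} (hconv : Convex ℝ P) (hclosed : IsClosed P) (x : V) :
    IsRayTame P x := by
  intro v
  by_cases hx : x ∈ P
  · by_cases h : ∃ t : ℝ, 0 < t ∧ x + t • v ∈ P
    · exact Or.inl ((hconv.mem_tanGerm_iff hx).2 h)
    · push Not at h
      exact Or.inr (eventually_nhdsWithin_of_forall fun t ht => h t ht)
  · exact Or.inr ((tendsto_add_smul_nhdsGT x v).eventually (hclosed.isOpen_compl.mem_nhds hx))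

end TangentGerm

section Homogenization

variable {V : Type*} [AddCommGroup V] [Module ℝ V]

lemma convex_setOf_toLp_mem_fgCone (W : Finset (WithLp 2 (V × ℝ))) :
    Convex ℝ {x : V | WithLp.toLp 2 (x, (1 : ℝ)) ∈ fgCone W} := by
  intro x hx y hy a b ha hb hab
  have : WithLp.toLp 2 (a • x + b • y, (1 : ℝ)) =
      a • WithLp.toLp 2 (x, (1 : ℝ)) + b • WithLp.toLp 2 (y, (1 : ℝ)) := by
    simp [← WithLp.toLp_smul, ← WithLp.toLp_add, hab]
  rw [Set.mem_ofPred_eq, this]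
  exact convex_fgCone W hx hy ha hb hab

/-- Dehomogenization: a cone all of whose nonzero generators lie in the open upper halfspace
cuts the affine hyperplane at height `1` in the convex hull of the rescaled generators. -/
lemma setOf_toLp_mem_fgCone_eq_convexHull (W : Finset (WithLp 2 (V × ℝ)))
    (hW : ∀ w ∈ W, w = 0 ∨ 0 < w.snd) :
    {x : V | WithLp.toLp 2 (x, (1 : ℝ)) ∈ fgCone W} =
      convexHull ℝ ↑((W.erase 0).image fun w => w.snd⁻¹ • w.fst) := by
  have hpos : ∀ w ∈ W.erase 0, 0 < w.snd := fun w hw =>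
    (hW w (Finset.mem_of_mem_erase hw)).resolve_left (Finset.ne_of_mem_erase hw)
  refine subset_antisymm (fun x hx => ?_)
    (convexHull_min (fun y hy => ?_) (convex_setOf_toLp_mem_fgCone W))
  · obtain ⟨c, hc, hx⟩ := hx
    rw [← Finset.sum_erase W (f := fun v => c v • v) (smul_zero _)] at hx
    have h₁ := congrArg (fun z => (WithLp.ofLp z).1) hx
    have h₂ := congrArg (fun z => (WithLp.ofLp z).2) hx
    simp only [WithLp.ofLp_sum, WithLp.ofLp_smul, Prod.fst_sum, Prod.smul_fst, WithLp.ofLp_fst,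
      Prod.snd_sum, Prod.smul_snd, WithLp.ofLp_snd, smul_eq_mul] at h₁ h₂
    rw [h₁, Finset.sum_congr rfl fun w hw => by
      rw [← mul_inv_cancel_right₀ (hpos w hw).ne' (c w), ← smul_smul]]
    exact (convex_convexHull ℝ _).sum_mem (fun w hw => mul_nonneg (hc w) (hpos w hw).le) h₂.symm
      fun w hw => subset_convexHull ℝ _ (Finset.mem_image_of_mem _ hw)
  · obtain ⟨w, hw, rfl⟩ := Finset.mem_image.1 hy
    have hw0 := hpos w hw
    have : WithLp.toLp 2 (w.snd⁻¹ • w.fst, (1 : ℝ)) = w.snd⁻¹ • w := by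
      rw [← inv_mul_cancel₀ hw0.ne']
      rfl
    rw [Set.mem_ofPred_eq, this]
    exact smul_mem_fgCone (inv_nonneg.2 hw0.le) (mem_fgCone_of_mem (Finset.mem_of_mem_erase hw))

lemma eq_zero_or_pos_of_mem_fgCone {W : Finset (WithLp 2 (V × ℝ))} (hW : ∀ w ∈ W, w.snd = 1)
    {y : WithLp 2 (V × ℝ)} (hy : y ∈ fgCone W) : y = 0 ∨ 0 < y.snd := by
  obtain ⟨c, hc, rfl⟩ := hy
  have hsnd : (∑ w ∈ W, c w • w).snd = ∑ w ∈ W, c w := by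
    change (WithLp.ofLp (∑ w ∈ W, c w • w)).2 = _
    simp only [WithLp.ofLp_sum, WithLp.ofLp_smul, Prod.snd_sum, Prod.smul_snd, WithLp.ofLp_snd,
      smul_eq_mul]
    exact Finset.sum_congr rfl fun w hw => by rw [hW w hw, mul_one]
  rw [hsnd]
  refine (Finset.sum_nonneg fun w _ => hc w).eq_or_lt.imp (fun h => ?_) id
  exact Finset.sum_eq_zero fun w hw => by
    rw [(Finset.sum_eq_zero_iff_of_nonneg fun w _ => hc w).1 h.symm w hw, zero_smul]

lemma convexHull_eq_setOf_toLp_mem_fgCone (s : Finset V) :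
    convexHull ℝ (s : Set V) =
      {x : V | WithLp.toLp 2 (x, (1 : ℝ)) ∈ fgCone (s.image fun q => WithLp.toLp 2 (q, 1))} := by
  refine subset_antisymm (convexHull_min (fun q hq => mem_fgCone_of_mem
    (Finset.mem_image_of_mem _ hq)) (convex_setOf_toLp_mem_fgCone _)) ?_
  rw [setOf_toLp_mem_fgCone_eq_convexHull _ fun w hw => ?_]
  · refine convexHull_mono fun y hy => ?_
    obtain ⟨w, hw, rfl⟩ := Finset.mem_image.1 hy
    obtain ⟨q, hq, rfl⟩ := Finset.mem_image.1 (Finset.mem_of_mem_erase hw)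
    simpa using hq
  · obtain ⟨q, -, rfl⟩ := Finset.mem_image.1 hw
    exact Or.inr (by simp)

end Homogenization

theorem exists_convexHull_eq_inter {V : Type*} [NormedAddCommGroup V] [InnerProductSpace ℝ V]
    [FiniteDimensional ℝ V] (s t : Finset V) :
    ∃ u : Finset V, convexHull ℝ (s : Set V) ∩ convexHull ℝ (t : Set V) = convexHull ℝ u := by
  obtain ⟨W, hW⟩ := exists_fgCone_eq_inter (s.image fun q => WithLp.toLp 2 (q, (1 : ℝ)))
    (t.image fun q => WithLp.toLp 2 (q, (1 : ℝ)))
  have hW' : ∀ w ∈ W, w = 0 ∨ 0 < w.snd := fun w hw =>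
    eq_zero_or_pos_of_mem_fgCone (by simp) (hW ▸ mem_fgCone_of_mem hw).1
  refine ⟨(W.erase 0).image fun w => w.snd⁻¹ • w.fst, ?_⟩
  rw [← setOf_toLp_mem_fgCone_eq_convexHull W hW', ← hW, convexHull_eq_setOf_toLp_mem_fgCone,
    convexHull_eq_setOf_toLp_mem_fgCone]
  rfl

section Polyhedra

variable {n : ℕ}

lemma polarDual_fgCone (t : Finset (E n)) : polarDual (fgCone t) = hCone t := by
  ext u
  refine ⟨fun hu w hw => ?_, fun hu y hy => ?_⟩
  · rw [real_inner_comm]; exact hu w (mem_fgCone_of_mem hw)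
  · rw [real_inner_comm]; exact inner_nonpos_of_mem_fgCone_of_mem_hCone hy hu

lemma isPolyhedralCone_fgCone (t : Finset (E n)) : IsPolyhedralCone (fgCone t) :=
  (exists_hCone_eq_fgCone t).imp fun _ h => h

lemma Tan_eq_tanGerm {P : Set (E n)} {x : E n} (hx : x ∈ P) : Tan P x = tanGerm P x := by
  ext v
  constructor
  · rintro ⟨l, hl, hseg⟩
    rw [segment_eq_image'] at hseg
    filter_upwards [Ioc_mem_nhdsGT hl] with t ht
    refine hseg ⟨t / l, ⟨div_nonneg ht.1.le hl.le, (div_le_one hl).2 ht.2⟩, ?_⟩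
    dsimp only
    rw [add_sub_cancel_left, smul_smul, div_mul_cancel₀ _ hl.ne']
  · intro h
    obtain ⟨ε, hε, hsub⟩ := mem_nhdsGT_iff_exists_Ioo_subset.1 h
    refine ⟨ε / 2, half_pos hε, ?_⟩
    rw [segment_eq_image']
    rintro _ ⟨θ, ⟨hθ0, hθ1⟩, rfl⟩
    change x + θ • (x + (ε / 2) • v - x) ∈ P
    rw [add_sub_cancel_left, smul_smul]
    rcases hθ0.eq_or_lt with rfl | hθ
    · simpa using hx
    · exact hsub ⟨mul_pos hθ (half_pos hε), by nlinarith [hε.out]⟩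

lemma IsPolytope.convex {A : Set (E n)} (hA : IsPolytope A) : Convex ℝ A := by
  obtain ⟨s, -, rfl⟩ := hA
  exact convex_convexHull ℝ _

lemma IsPolytope.isClosed {A : Set (E n)} (hA : IsPolytope A) : IsClosed A := by
  obtain ⟨s, -, rfl⟩ := hA
  exact (s.finite_toSet.isCompact_convexHull (𝕜 := ℝ)).isClosed

lemma IsPolytope.isPolyhedron {A : Set (E n)} (hA : IsPolytope A) : IsPolyhedron A :=
  ⟨{A}, by simpa using hA, by simp⟩

lemma IsPolyhedron.isClosed {P : Set (E n)} (hP : IsPolyhedron P) : IsClosed P := by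
  obtain ⟨F, hF, rfl⟩ := hP
  rw [Set.sUnion_eq_biUnion]
  exact isClosed_biUnion_finset fun A hA => (hF A hA).isClosed

lemma IsPolytope.inter {A B : Set (E n)} (hA : IsPolytope A) (hB : IsPolytope B)
    (hAB : (A ∩ B).Nonempty) : IsPolytope (A ∩ B) := by
  obtain ⟨s, -, rfl⟩ := hA
  obtain ⟨t, -, rfl⟩ := hB
  obtain ⟨u, hu⟩ := exists_convexHull_eq_inter s t
  refine ⟨u, ?_, hu⟩
  rw [hu] at hAB
  exact Finset.coe_nonempty.1 (convexHull_nonempty_iff.1 hAB)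

lemma exists_polytopes_sUnion_eq_inter {A : Set (E n)} (hA : IsPolytope A)
    {G : Finset (Set (E n))} (hG : ∀ B ∈ G, IsPolytope B) :
    ∃ G' : Finset (Set (E n)), G'.card ≤ G.card ∧ (∀ C ∈ G', IsPolytope C) ∧
      ⋃₀ (G' : Set (Set (E n))) = A ∩ ⋃₀ (G : Set (Set (E n))) := by
  refine ⟨(G.image (A ∩ ·)).filter Set.Nonempty,
    (Finset.card_filter_le _ _).trans Finset.card_image_le, fun C hC => ?_, ?_⟩
  · obtain ⟨hC, hne⟩ := Finset.mem_filter.1 hC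
    obtain ⟨B, hB, rfl⟩ := Finset.mem_image.1 hC
    exact hA.inter (hG B hB) hne
  · ext x
    simp only [Finset.coe_filter, Finset.mem_image, Set.mem_sUnion, Set.mem_ofPred_eq,
      Set.mem_inter_iff, Finset.mem_coe]
    constructor
    · rintro ⟨_, ⟨⟨B, hB, rfl⟩, -⟩, hxA, hxB⟩
      exact ⟨hxA, B, hB, hxB⟩
    · rintro ⟨hxA, B, hB, hxB⟩
      exact ⟨A ∩ B, ⟨⟨B, hB, rfl⟩, x, hxA, hxB⟩, hxA, hxB⟩

lemma isConeUnion_empty : IsConeUnion (∅ : Set (E n)) := ⟨∅, by simp, by simp⟩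

lemma IsPolyhedralCone.isConeUnion {C : Set (E n)} (hC : IsPolyhedralCone C) : IsConeUnion C :=
  ⟨{C}, by simpa using hC, by simp⟩

lemma IsConeUnion.union {S T : Set (E n)} (hS : IsConeUnion S) (hT : IsConeUnion T) :
    IsConeUnion (S ∪ T) := by
  obtain ⟨F, hF, rfl⟩ := hS
  obtain ⟨G, hG, rfl⟩ := hT
  exact ⟨F ∪ G, fun A hA => (Finset.mem_union.1 hA).elim (hF A) (hG A), by simp [Set.sUnion_union]⟩

lemma IsPolytope.isConeUnion_tanGerm {A : Set (E n)} (hA : IsPolytope A) (x : E n) :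
    IsConeUnion (tanGerm A x) := by
  by_cases hx : x ∈ A
  · obtain ⟨s, -, rfl⟩ := hA
    rw [tanGerm_convexHull hx]
    exact (isPolyhedralCone_fgCone _).isConeUnion
  · rw [hA.isClosed.tanGerm_eq_empty hx]
    exact isConeUnion_empty

lemma IsPolyhedron.isConeUnion_tanGerm {P : Set (E n)} (hP : IsPolyhedron P) (x : E n) :
    IsConeUnion (tanGerm P x) := by
  obtain ⟨F, hF, rfl⟩ := hP
  induction F using Finset.induction with
  | empty => simpa [isClosed_empty.tanGerm_eq_empty] using isConeUnion_empty
  | @insert A F _ ih =>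
    have hA := hF A (Finset.mem_insert_self A F)
    rw [Finset.coe_insert, Set.sUnion_insert, (hA.convex.isRayTame hA.isClosed x).tanGerm_union]
    exact (hA.isConeUnion_tanGerm x).union (ih fun B hB => hF B (Finset.mem_insert_of_mem hB))

end Polyhedra

lemma finite_support_and_finsum_of_add_eq {α : Type*} {f g h k : α → ℝ}
    (hg : {x | g x ≠ 0}.Finite) (hh : {x | h x ≠ 0}.Finite) (hk : {x | k x ≠ 0}.Finite)
    (hfk : ∀ x, f x + k x = g x + h x) :
    {x | f x ≠ 0}.Finite ∧ ∑ᶠ x, f x = ∑ᶠ x, g x + ∑ᶠ x, h x - ∑ᶠ x, k x := by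
  obtain rfl : f = fun x => g x + h x - k x := funext fun x => by linarith [hfk x]
  have hgh : (Function.support fun x => g x + h x).Finite :=
    (hg.union hh).subset (Function.support_add _ _)
  exact ⟨(hgh.union hk).subset (Function.support_sub _ _),
    by rw [finsum_sub_distrib hgh hk, finsum_add_distrib hg hh]⟩

section GaussBonnet

variable {n : ℕ} {φ φd : Set (E n) → ℝ} {κ : Set (E n) → E n → ℝ}

theorem IsPolyhedron.finite_support_and_finsum_eq {χ : Set (E n) → ℝ} (hχ0 : χ ∅ = 0)
    (hχval : ∀ A B : Set (E n), IsPolyhedron A → IsPolyhedron B →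
      χ (A ∪ B) + χ (A ∩ B) = χ A + χ B)
    (hκ0 : ∀ x, κ ∅ x = 0)
    (hpoly : ∀ A, IsPolytope A → {x | κ A x ≠ 0}.Finite ∧ ∑ᶠ x, κ A x = χ A)
    (hval : ∀ A Q, IsPolytope A → IsPolyhedron Q → ∀ x,
      κ (A ∪ Q) x + κ (A ∩ Q) x = κ A x + κ Q x)
    {P : Set (E n)} (hP : IsPolyhedron P) : {x | κ P x ≠ 0}.Finite ∧ ∑ᶠ x, κ P x = χ P := by
  obtain ⟨F, hF, rfl⟩ := hP
  induction hk : F.card using Nat.strong_induction_on generalizing F with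
  | _ k ih =>
  rcases F.eq_empty_or_nonempty with rfl | ⟨A, hAF⟩
  · simp [hκ0, hχ0]
  have hA := hF A hAF
  have hG : ∀ B ∈ F.erase A, IsPolytope B := fun B hB => hF B (Finset.mem_of_mem_erase hB)
  have hcard : (F.erase A).card < k := hk ▸ Finset.card_erase_lt_of_mem hAF
  obtain ⟨G', hG'card, hG', hG'U⟩ := exists_polytopes_sUnion_eq_inter hA hG
  set Q := ⋃₀ ((F.erase A : Finset (Set (E n))) : Set (Set (E n)))
  have hQ : IsPolyhedron Q := ⟨_, hG, rfl⟩
  obtain ⟨hAfin, hAsum⟩ := hpoly A hA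
  obtain ⟨hQfin, hQsum⟩ := ih _ hcard (F.erase A) hG rfl
  obtain ⟨hRfin, hRsum⟩ := ih _ (hG'card.trans_lt hcard) G' hG' rfl
  rw [hG'U] at hRfin hRsum
  obtain ⟨hfin, hsum⟩ := finite_support_and_finsum_of_add_eq hAfin hQfin hRfin (hval A Q hA hQ)
  rw [← Finset.insert_erase hAF, Finset.coe_insert, Set.sUnion_insert]
  refine ⟨hfin, ?_⟩
  rw [hsum, hAsum, hQsum, hRsum]
  linarith [hχval A Q hA.isPolyhedron hQ]

lemma kappa_eq_of_isClosed
    (hκ : ∀ (P : Set (E n)) (x : E n), κ P x = if x ∈ P then φd (Tan P x) else 0)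
    (hd0 : φd ∅ = 0) {P : Set (E n)} (hP : IsClosed P) (x : E n) :
    κ P x = φd (tanGerm P x) := by
  rw [hκ]
  split_ifs with hx
  · rw [Tan_eq_tanGerm hx]
  · rw [hP.tanGerm_eq_empty hx, hd0]

lemma kappa_union_add_kappa_inter
    (hκ : ∀ (P : Set (E n)) (x : E n), κ P x = if x ∈ P then φd (Tan P x) else 0)
    (hd0 : φd ∅ = 0)
    (hdval : ∀ A B : Set (E n), IsConeUnion A → IsConeUnion B →
      φd (A ∪ B) + φd (A ∩ B) = φd A + φd B)
    {A Q : Set (E n)} (hA : IsPolytope A) (hQ : IsPolyhedron Q) (x : E n) :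
    κ (A ∪ Q) x + κ (A ∩ Q) x = κ A x + κ Q x := by
  rw [kappa_eq_of_isClosed hκ hd0 (hA.isClosed.union hQ.isClosed),
    kappa_eq_of_isClosed hκ hd0 (hA.isClosed.inter hQ.isClosed),
    kappa_eq_of_isClosed hκ hd0 hA.isClosed, kappa_eq_of_isClosed hκ hd0 hQ.isClosed,
    (hA.convex.isRayTame hA.isClosed x).tanGerm_union, tanGerm_inter]
  exact hdval _ _ (hA.isConeUnion_tanGerm x) (hQ.isConeUnion_tanGerm x)

lemma kappa_convexHull
    (hκ : ∀ (P : Set (E n)) (x : E n), κ P x = if x ∈ P then φd (Tan P x) else 0)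
    (hdext : ∀ C : Set (E n), IsPolyhedralCone C → φd C = φ (polarDual C))
    {s : Finset (E n)} {x : E n} (hx : x ∈ convexHull ℝ (s : Set (E n))) :
    κ (convexHull ℝ (s : Set (E n))) x = φ (hCone (s.image (· - x))) := by
  rw [hκ, if_pos hx, Tan_eq_tanGerm hx, tanGerm_convexHull hx,
    hdext _ (isPolyhedralCone_fgCone _), polarDual_fgCone]

theorem IsPolytope.finite_support_kappa_and_finsum_eq_one
    (hκ : ∀ (P : Set (E n)) (x : E n), κ P x = if x ∈ P then φd (Tan P x) else 0)
    (hφ : IsConeValuation φ) (hsimple : IsSimple φ) (hnorm : φ Set.univ = 1)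
    (hdext : ∀ C : Set (E n), IsPolyhedralCone C → φd C = φ (polarDual C))
    {A : Set (E n)} (hA : IsPolytope A) : {x | κ A x ≠ 0}.Finite ∧ ∑ᶠ x, κ A x = 1 := by
  obtain ⟨s, hs, rfl⟩ := hA
  have hsupp : Function.support (κ (convexHull ℝ (s : Set (E n)))) ⊆ s := fun x hx => by
    by_contra hxs
    by_cases hxA : x ∈ convexHull ℝ (s : Set (E n))
    · exact hx (by rw [kappa_convexHull hκ hdext hxA, hsimple.phi_hCone_image_sub_eq_zero hxA hxs])
    · exact hx (by rw [hκ, if_neg hxA])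
  refine ⟨s.finite_toSet.subset hsupp, ?_⟩
  rw [finsum_eq_sum_of_support_subset _ hsupp, Finset.sum_congr rfl fun v hv =>
    kappa_convexHull hκ hdext (subset_convexHull ℝ _ hv),
    sum_phi_hCone_image_sub hφ hsimple hnorm hs]

end GaussBonnet

/-- Polyhedral Gauss–Bonnet theorem: for the vertex curvature `κ` built from a simple
normalized cone valuation `φ` via the extension `φd` of its dual valuation,
`κ(P,·)` has finite support and `Σ_{x} κ(P,x) = χ(P)` for every polyhedron `P`,
where `χ` is the Euler characteristic. -/
theorem stmt11 {n : ℕ} (φ φd : Set (E n) → ℝ)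
    (hφ : IsConeValuation φ) (hsimple : IsSimple φ) (hnorm : φ (Set.univ : Set (E n)) = 1)
    (hd0 : φd ∅ = 0)
    (hdval : ∀ A B : Set (E n), IsConeUnion A → IsConeUnion B →
      φd (A ∪ B) + φd (A ∩ B) = φd A + φd B)
    (hdext : ∀ C : Set (E n), IsPolyhedralCone C → φd C = φ (polarDual C))
    (κ : Set (E n) → E n → ℝ)
    (hκ : ∀ (P : Set (E n)) (x : E n), κ P x = if x ∈ P then φd (Tan P x) else 0)
    (χ : Set (E n) → ℝ) (hχ0 : χ ∅ = 0)
    (hχ1 : ∀ P : Set (E n), IsPolytope P → χ P = 1)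
    (hχval : ∀ A B : Set (E n), IsPolyhedron A → IsPolyhedron B →
      χ (A ∪ B) + χ (A ∩ B) = χ A + χ B)
    (P : Set (E n)) (hP : IsPolyhedron P) :
    {x : E n | κ P x ≠ 0}.Finite ∧ ∑ᶠ x : E n, κ P x = χ P := by
  refine hP.finite_support_and_finsum_eq hχ0 hχval
    (fun x => by rw [hκ, if_neg (Set.notMem_empty x)]) (fun A hA => ?_)
    fun A Q hA hQ => kappa_union_add_kappa_inter hκ hd0 hdval hA hQ
  rw [hχ1 A hA]
  exact hA.finite_support_kappa_and_finsum_eq_one hκ hφ hsimple hnorm hdext
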